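/- arXiv:1810.08839 — 2 statements merged into one kernel-verified Lean document; each statement's English description precedes it below -/
import Mathlib

section
/- Let n ≥ 1 and 0 ≤ r ≤ n be integers and let f : [0,1] → ℝ be r times continuously differentiable. Then sup_{x∈[0,1]} |(B_n f)^{(r)}(x) − B_{n−r}(f^{(r)})(x)| ≤ (r(r−1)/(2n))·‖f^{(r)}‖ + ω(f^{(r)}, r/n). -/
/-!
Writing `B_n f = Σ_k p_{n,k} a_k` with samples `a_k = f(k/n)`, differentiation of the Bernstein
basis followed by summation by parts gives `(B_n f)' = n Σ_k p_{n-1,k} Δa_k`. Iterating with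
`n = m + r`, `(B_n f)^{(r)} = n(n-1)⋯(m+1) Σ_k p_{m,k} Δ^r a_k`, and the mean value theorem turns
each `Δ^r a_k` into `n^{-r} f^{(r)}(ξ_k)` with `ξ_k ∈ [k/n, (k+r)/n]`. Hence the difference is
`B_m` applied to `c f^{(r)}(ξ_k) - f^{(r)}(k/m)`, where `c = ∏_{i<r} (1 - i/n) ∈ [0, 1]`. Since
`k/m` lies in `[k/n, (k+r)/n]` as well, each term is at most `(1 - c)‖f^{(r)}‖ + ω(f^{(r)}, r/n)`,
and `1 - c ≤ Σ_{i<r} i/n = r(r-1)/(2n)`; `B_m` is positive and preserves constants.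
-/

/-- Bernstein basis polynomial `p_{n,k}(x) = C(n,k) x^k (1-x)^{n-k}`. -/
noncomputable def bern (n k : ℕ) (x : ℝ) : ℝ :=
  (n.choose k : ℝ) * x ^ k * (1 - x) ^ (n - k)

/-- Bernstein operator `B_n(f;x) = Σ_{k=0}^n p_{n,k}(x) f(k/n)`. -/
noncomputable def bernsteinOp (n : ℕ) (f : ℝ → ℝ) (x : ℝ) : ℝ :=
  ∑ k ∈ Finset.range (n + 1), bern n k x * f ((k : ℝ) / (n : ℝ))

/-- Supremum norm on `[0,1]`. -/
noncomputable def supNorm (g : ℝ → ℝ) : ℝ :=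
  ⨆ x : Set.Icc (0:ℝ) 1, |g x|

/-- First modulus of continuity on `[0,1]`. -/
noncomputable def modCont (g : ℝ → ℝ) (δ : ℝ) : ℝ :=
  sSup {d : ℝ | ∃ x ∈ Set.Icc (0:ℝ) 1, ∃ y ∈ Set.Icc (0:ℝ) 1, |x - y| ≤ δ ∧ d = |g x - g y|}


open Finset Set fwdDiff

lemma bern_eq_eval (n k : ℕ) (x : ℝ) : bern n k x = (bernsteinPolynomial ℝ n k).eval x := by
  simp [bern, bernsteinPolynomial]

lemma bern_nonneg (n k : ℕ) {x : ℝ} (hx : x ∈ Icc (0 : ℝ) 1) : 0 ≤ bern n k x := by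
  have : 0 ≤ 1 - x := sub_nonneg.mpr hx.2
  have := hx.1
  unfold bern
  positivity

lemma sum_bern (n : ℕ) (x : ℝ) : ∑ k ∈ range (n + 1), bern n k x = 1 := by
  simp [bern_eq_eval, ← Polynomial.eval_finsetSum, bernsteinPolynomial.sum]

lemma hasDerivAt_bern_zero (n : ℕ) (x : ℝ) :
    HasDerivAt (bern n 0) (-n * bern (n - 1) 0 x) x := by
  simp only [funext (bern_eq_eval n 0), bern_eq_eval]
  simpa [bernsteinPolynomial.derivative_zero] using (bernsteinPolynomial ℝ n 0).hasDerivAt x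

lemma hasDerivAt_bern_succ (n k : ℕ) (x : ℝ) :
    HasDerivAt (bern n (k + 1)) (n * (bern (n - 1) k x - bern (n - 1) (k + 1) x)) x := by
  simp only [funext (bern_eq_eval n (k + 1)), bern_eq_eval]
  simpa [bernsteinPolynomial.derivative_succ] using (bernsteinPolynomial ℝ n (k + 1)).hasDerivAt x

noncomputable def bernsteinSum (n : ℕ) (a : ℕ → ℝ) (x : ℝ) : ℝ :=
  ∑ k ∈ range (n + 1), bern n k x * a k

lemma bernsteinOp_eq_bernsteinSum (n : ℕ) (f : ℝ → ℝ) :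
    bernsteinOp n f = bernsteinSum n (fun k => f (k / n)) := rfl

lemma hasDerivAt_bernsteinSum (n : ℕ) (a : ℕ → ℝ) (x : ℝ) :
    HasDerivAt (bernsteinSum (n + 1) a) ((n + 1) * bernsteinSum n (Δ_[1] a) x) x := by
  have hsplit : bernsteinSum (n + 1) a = fun y =>
      ∑ k ∈ range (n + 1), bern (n + 1) (k + 1) y * a (k + 1) + bern (n + 1) 0 y * a 0 := by
    funext y; exact sum_range_succ' _ _
  have hsum := (HasDerivAt.fun_sum (u := range (n + 1)) fun k _ =>
    (hasDerivAt_bern_succ (n + 1) k x).mul_const (a (k + 1))).fun_add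
    ((hasDerivAt_bern_zero (n + 1) x).mul_const (a 0))
  rw [hsplit]
  refine hsum.congr_deriv ?_
  have hshift : ∑ k ∈ range (n + 1), bern n (k + 1) x * a (k + 1) + bern n 0 x * a 0 =
      ∑ k ∈ range (n + 1), bern n k x * a k := by
    rw [← sum_range_succ' (fun k => bern n k x * a k), sum_range_succ]
    simp [bern]
  simp only [bernsteinSum, fwdDiff, add_tsub_cancel_right, Nat.cast_add, Nat.cast_one, mul_sub,
    sub_mul, sum_sub_distrib, mul_assoc, ← mul_sum]
  linear_combination -(n + 1 : ℝ) * hshift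

-- `Δ_[1] ^[r]` needs the space: `]^` is a token once all of Mathlib is imported.
lemma iteratedDeriv_bernsteinSum (a : ℕ → ℝ) (r : ℕ) : ∀ m : ℕ,
    iteratedDeriv r (bernsteinSum (m + r) a) =
      fun x => ((m + r).descFactorial r : ℝ) * bernsteinSum m (Δ_[1] ^[r] a) x := by
  induction r with
  | zero => intro m; funext x; simp
  | succ r ih =>
    intro m
    funext x
    rw [← add_assoc, add_right_comm, iteratedDeriv_succ, ih (m + 1),
      ((hasDerivAt_bernsteinSum m _ x).const_mul _).deriv, Function.iterate_succ_apply',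
      Nat.descFactorial_succ, Nat.add_sub_cancel]
    push_cast
    ring

lemma abs_bernsteinSum_le {m : ℕ} {a : ℕ → ℝ} {B : ℝ} (ha : ∀ k ≤ m, |a k| ≤ B) {x : ℝ}
    (hx : x ∈ Icc (0 : ℝ) 1) : |bernsteinSum m a x| ≤ B :=
  calc |bernsteinSum m a x|
      ≤ ∑ k ∈ range (m + 1), |bern m k x * a k| := abs_sum_le_sum_abs _ _
    _ ≤ ∑ k ∈ range (m + 1), bern m k x * B := sum_le_sum fun k hk => by
        rw [abs_mul, abs_of_nonneg (bern_nonneg m k hx)]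
        exact mul_le_mul_of_nonneg_left (ha k (Nat.lt_succ_iff.mp (mem_range.mp hk)))
          (bern_nonneg m k hx)
    _ = B := by rw [← sum_mul, sum_bern, one_mul]

lemma fwdDiff_iter_comp_div (f : ℝ → ℝ) (t : ℝ) (r k : ℕ) :
    Δ_[1] ^[r] (fun j : ℕ => f (j / t)) k = Δ_[t⁻¹] ^[r] f (k / t) := by
  rw [fwdDiff_iter_eq_sum_shift, fwdDiff_iter_eq_sum_shift]
  refine sum_congr rfl fun j _ => ?_
  simp only [smul_eq_mul, nsmul_eq_mul, mul_one, Nat.cast_add, add_div, div_eq_mul_inv (j : ℝ)]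

lemma exists_fwdDiff_eq_mul_deriv {g : ℝ → ℝ} (hg : Differentiable ℝ g) {h : ℝ} (hh : 0 ≤ h)
    (x : ℝ) : ∃ ζ ∈ Icc x (x + h), Δ_[h] g x = h * deriv g ζ := by
  rcases hh.eq_or_lt with rfl | hpos
  · exact ⟨x, by simp, by simp [fwdDiff]⟩
  obtain ⟨ζ, hζ, hslope⟩ := exists_deriv_eq_slope g (lt_add_of_pos_right x hpos)
    hg.continuous.continuousOn hg.differentiableOn
  refine ⟨ζ, Ioo_subset_Icc_self hζ, ?_⟩
  rw [hslope, fwdDiff, add_sub_cancel_left, mul_div_cancel₀ _ hpos.ne']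

lemma iteratedDeriv_fwdDiff {r : ℕ} {f : ℝ → ℝ} (hf : ContDiff ℝ r f) (h : ℝ) :
    iteratedDeriv r (Δ_[h] f) = Δ_[h] (iteratedDeriv r f) := by
  funext y
  have hshift : ContDiff ℝ r (fun z => f (z + h)) := hf.comp (contDiff_id.add contDiff_const)
  change iteratedDeriv r ((fun z => f (z + h)) - f) y = _
  rw [iteratedDeriv_sub hshift.contDiffAt hf.contDiffAt, iteratedDeriv_comp_add_const, fwdDiff]

lemma exists_fwdDiff_iter_eq_iteratedDeriv {r : ℕ} {f : ℝ → ℝ} (hf : ContDiff ℝ r f) {h : ℝ}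
    (hh : 0 ≤ h) (x : ℝ) :
    ∃ ξ ∈ Icc x (x + r * h), Δ_[h] ^[r] f x = h ^ r * iteratedDeriv r f ξ := by
  induction r generalizing f with
  | zero => exact ⟨x, by simp, by simp⟩
  | succ r ih =>
    have hfr : ContDiff ℝ r f := hf.of_le (by exact_mod_cast r.le_succ)
    have hΔ : ContDiff ℝ r (Δ_[h] f) := (hfr.comp (contDiff_id.add contDiff_const)).sub hfr
    obtain ⟨ξ, hξ, hξeq⟩ := ih hΔ
    obtain ⟨ζ, hζ, hζeq⟩ := exists_fwdDiff_eq_mul_deriv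
      (hf.differentiable_iteratedDeriv r (by exact_mod_cast r.lt_succ_self)) hh ξ
    refine ⟨ζ, ⟨hξ.1.trans hζ.1, hζ.2.trans ?_⟩, ?_⟩
    · push_cast; linarith [hξ.2]
    · rw [Function.iterate_succ_apply, hξeq, iteratedDeriv_fwdDiff hfr, hζeq, ← iteratedDeriv_succ,
        pow_succ, mul_assoc]

lemma descFactorial_div_pow_le_one (N r : ℕ) : (N.descFactorial r : ℝ) / N ^ r ≤ 1 :=
  div_le_one_of_le₀ (by exact_mod_cast N.descFactorial_le_pow r) (by positivity)

lemma one_sub_descFactorial_div_pow_le {N r : ℕ} (hr : r ≤ N) :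
    1 - (N.descFactorial r : ℝ) / N ^ r ≤ r * (r - 1) / (2 * N) := by
  induction r with
  | zero => simp
  | succ r ih =>
    have hN : (0 : ℝ) < N := by exact_mod_cast (r.zero_lt_succ.trans_le hr)
    set c : ℝ := N.descFactorial r / N ^ r
    have hstep : ((N.descFactorial (r + 1) : ℕ) : ℝ) / N ^ (r + 1) = c - c * (r / N) := by
      rw [Nat.descFactorial_succ, Nat.cast_mul, Nat.cast_sub (by omega), pow_succ]
      simp only [c]
      field_simp
    have hsplit :
        ((r + 1 : ℕ) : ℝ) * ((r + 1 : ℕ) - 1) / (2 * N) = r * (r - 1) / (2 * N) + r / N := by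
      push_cast
      field_simp
      ring
    have hcr : c * (r / N) ≤ r / N :=
      mul_le_of_le_one_left (by positivity) (descFactorial_div_pow_le_one N r)
    rw [hstep, hsplit]
    linarith [ih (by omega)]

lemma div_mem_Icc_div_add {k m : ℕ} (hk : k ≤ m) (r : ℕ) :
    (k / m : ℝ) ∈ Icc (k / (m + r : ℝ)) ((k + r) / (m + r)) := by
  rcases m.eq_zero_or_pos with rfl | hm
  · obtain rfl : k = 0 := Nat.le_zero.mp hk
    simp only [Nat.cast_zero, zero_div, zero_add, Set.mem_Icc, le_refl, true_and]
    positivity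
  have hm' : (0 : ℝ) < m := by exact_mod_cast hm
  have hk' : (k : ℝ) ≤ m := by exact_mod_cast hk
  constructor
  · exact div_le_div_of_nonneg_left k.cast_nonneg hm' (by simp)
  · rw [div_le_div_iff₀ hm' (by positivity)]
    nlinarith [r.cast_nonneg (α := ℝ)]

lemma Icc_div_add_subset_Icc {k m : ℕ} (hk : k ≤ m) (r : ℕ) :
    Icc (k / (m + r : ℝ)) ((k + r) / (m + r)) ⊆ Icc 0 1 :=
  Icc_subset_Icc (by positivity)
    (div_le_one_of_le₀ (by exact_mod_cast Nat.add_le_add_right hk r) (by positivity))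

lemma abs_sub_div_le {k m r : ℕ} (hk : k ≤ m) {ξ : ℝ}
    (hξ : ξ ∈ Icc (k / (m + r : ℝ)) ((k + r) / (m + r))) :
    |ξ - k / m| ≤ r / (m + r) := by
  have h := Real.dist_le_of_mem_Icc hξ (div_mem_Icc_div_add hk r)
  rwa [Real.dist_eq, add_div, add_sub_cancel_left] at h

lemma abs_le_supNorm {g : ℝ → ℝ} (hg : ContinuousOn g (Icc 0 1)) {t : ℝ}
    (ht : t ∈ Icc (0 : ℝ) 1) : |g t| ≤ supNorm g := by
  have hb : BddAbove (range fun x : Icc (0 : ℝ) 1 => |g x|) := by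
    simpa only [image_eq_range] using isCompact_Icc.bddAbove_image hg.abs
  exact le_ciSup hb ⟨t, ht⟩

lemma supNorm_nonneg {g : ℝ → ℝ} (hg : ContinuousOn g (Icc 0 1)) : 0 ≤ supNorm g :=
  (abs_nonneg (g 0)).trans (abs_le_supNorm hg (by simp))

lemma abs_sub_le_modCont {g : ℝ → ℝ} (hg : ContinuousOn g (Icc 0 1)) {δ x y : ℝ}
    (hx : x ∈ Icc (0 : ℝ) 1) (hy : y ∈ Icc (0 : ℝ) 1) (hxy : |x - y| ≤ δ) :
    |g x - g y| ≤ modCont g δ := by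
  refine le_csSup ⟨2 * supNorm g, ?_⟩ ⟨x, hx, y, hy, hxy, rfl⟩
  rintro d ⟨u, hu, v, hv, -, rfl⟩
  linarith [abs_sub _ _ |>.trans (add_le_add (abs_le_supNorm hg hu) (abs_le_supNorm hg hv))]

lemma abs_mul_sub_le {c a b M ω : ℝ} (hc1 : c ≤ 1) (ha : |a| ≤ M)
    (hab : |a - b| ≤ ω) : |c * a - b| ≤ (1 - c) * M + ω :=
  calc |c * a - b| = |(c - 1) * a + (a - b)| := by ring_nf
    _ ≤ |(c - 1) * a| + |a - b| := abs_add_le _ _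
    _ = (1 - c) * |a| + |a - b| := by rw [abs_mul, abs_of_nonpos (by linarith), neg_sub]
    _ ≤ (1 - c) * M + ω := by gcongr

theorem bernstein_derivative_difference_general
    (n r : ℕ) (hr : r ≤ n) (f : ℝ → ℝ) (hf : ContDiff ℝ r f) :
    ∀ x ∈ Set.Icc (0:ℝ) 1,
      |iteratedDeriv r (bernsteinOp n f) x - bernsteinOp (n - r) (iteratedDeriv r f) x| ≤
        (r : ℝ) * ((r : ℝ) - 1) / (2 * (n : ℝ)) * supNorm (iteratedDeriv r f)
          + modCont (iteratedDeriv r f) ((r : ℝ) / (n : ℝ)) := by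
  intro x hx
  obtain ⟨m, rfl⟩ := Nat.exists_eq_add_of_le' hr
  set g := iteratedDeriv r f
  have hg : ContinuousOn g (Icc 0 1) := (hf.continuous_iteratedDeriv r le_rfl).continuousOn
  set c : ℝ := (m + r).descFactorial r / ((m + r : ℕ) : ℝ) ^ r
  choose ξ hξ hΔ using fun k : ℕ => exists_fwdDiff_iter_eq_iteratedDeriv hf
    (h := ((m + r : ℕ) : ℝ)⁻¹) (by positivity) (k / (m + r : ℕ))
  have hdiff : iteratedDeriv r (bernsteinOp (m + r) f) x - bernsteinOp (m + r - r) g x =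
      bernsteinSum m (fun k => c * g (ξ k) - g (k / m)) x := by
    rw [Nat.add_sub_cancel]
    simp only [bernsteinOp_eq_bernsteinSum, iteratedDeriv_bernsteinSum, bernsteinSum, mul_sum,
      ← sum_sub_distrib, fwdDiff_iter_comp_div, hΔ]
    refine sum_congr rfl fun k _ => ?_
    simp only [c, inv_pow, div_eq_mul_inv]
    ring
  have hterm : ∀ k ≤ m,
      |c * g (ξ k) - g (k / m)| ≤ (1 - c) * supNorm g + modCont g (r / (m + r : ℕ)) := by
    intro k hk
    have hξk : ξ k ∈ Icc (k / (m + r : ℝ)) ((k + r) / (m + r)) := by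
      have h := hξ k
      push_cast at h
      rwa [← div_eq_mul_inv, ← add_div] at h
    have hξ01 := Icc_div_add_subset_Icc hk r hξk
    have hnode01 := Icc_div_add_subset_Icc hk r (div_mem_Icc_div_add hk r)
    refine abs_mul_sub_le (descFactorial_div_pow_le_one _ r) (abs_le_supNorm hg hξ01)
      (abs_sub_le_modCont hg hξ01 hnode01 ?_)
    push_cast
    exact abs_sub_div_le hk hξk
  rw [hdiff]
  refine (abs_bernsteinSum_le hterm hx).trans ?_
  gcongr
  · exact supNorm_nonneg hg
  · exact one_sub_descFactorial_div_pow_le hr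

theorem bernstein_derivative_difference
    (n r : ℕ) (hn : 1 ≤ n) (hr : r ≤ n) (f : ℝ → ℝ) (hf : ContDiff ℝ r f) :
    ∀ x ∈ Set.Icc (0:ℝ) 1,
      |iteratedDeriv r (bernsteinOp n f) x - bernsteinOp (n - r) (iteratedDeriv r f) x| ≤
        (r : ℝ) * ((r : ℝ) - 1) / (2 * (n : ℝ)) * supNorm (iteratedDeriv r f)
          + modCont (iteratedDeriv r f) ((r : ℝ) / (n : ℝ)) :=
  bernstein_derivative_difference_general n r hr f hf
end

section
/- Let F : C[0,1] → ℝ be a positive linear functional with F(e₀) = 1 and F(e₁) = b (so in particular b ∈ [0,1]). Then for every twice continuously differentiable function φ : [0,1] → ℝ there exists ξ ∈ [0,1] such that F(φ) − φ(b) = (F(e₂) − b²) · φ''(ξ)/2. -/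
/-!
By Taylor's theorem with Lagrange remainder, `φ x - φ b - φ' b (x - b)` lies between `m (x - b)²`
and `M (x - b)²` whenever `m ≤ φ'' / 2 ≤ M` on `[0,1]`. A positive functional is monotone, and the
normalisations `F e₀ = 1`, `F e₁ = b` make it reproduce affine functions and send `(x - b)²` to
`F e₂ - b²`. Hence `F φ - φ b` is trapped between `m (F e₂ - b²)` and `M (F e₂ - b²)` for the
extreme values `m, M` of `φ'' / 2`, and the intermediate value theorem produces `ξ`.
-/

/-- The monomial `e_r(x) = x^r` as a continuous map on `[0,1]`. -/
noncomputable def eMon (r : ℕ) : C(Set.Icc (0:ℝ) 1, ℝ) :=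
  ⟨fun x => (x : ℝ) ^ r, by continuity⟩

open Set

lemma ContDiff.exists_taylor_two {φ : ℝ → ℝ} (hφ : ContDiff ℝ 2 φ) (b x : ℝ) :
    ∃ η ∈ uIcc b x, φ x - φ b - deriv φ b * (x - b) = iteratedDeriv 2 φ η / 2 * (x - b) ^ 2 := by
  rcases eq_or_ne b x with rfl | hbx
  · exact ⟨b, left_mem_uIcc, by ring⟩
  obtain ⟨η, hη, h⟩ := taylor_mean_remainder_lagrange_iteratedDeriv (n := 1) hbx hφ.contDiffOn
  have hderiv : iteratedDerivWithin 1 φ (uIcc b x) b = deriv φ b := by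
    rw [iteratedDerivWithin_one]
    exact ((hφ.differentiable two_ne_zero) b).derivWithin
      ((uniqueDiffOn_uIcc hbx) b left_mem_uIcc)
  refine ⟨η, uIoo_subset_uIcc_self hη, ?_⟩
  rw [taylorWithinEval_succ, taylor_within_zero_eval, hderiv] at h
  simp only [Nat.factorial, smul_eq_mul] at h
  push_cast at h
  linarith

lemma ContDiff.taylor_two_lower_bound {φ : ℝ → ℝ} (hφ : ContDiff ℝ 2 φ) {S : Set ℝ}
    [S.OrdConnected] {b x m : ℝ} (hb : b ∈ S) (hx : x ∈ S)
    (hm : ∀ y ∈ S, m ≤ iteratedDeriv 2 φ y / 2) :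
    φ b + deriv φ b * (x - b) + m * (x - b) ^ 2 ≤ φ x := by
  obtain ⟨η, hη, h⟩ := hφ.exists_taylor_two b x
  have := mul_le_mul_of_nonneg_right (hm η (OrdConnected.uIcc_subset ‹_› hb hx hη))
    (sq_nonneg (x - b))
  linarith

lemma ContDiff.taylor_two_upper_bound {φ : ℝ → ℝ} (hφ : ContDiff ℝ 2 φ) {S : Set ℝ}
    [S.OrdConnected] {b x M : ℝ} (hb : b ∈ S) (hx : x ∈ S)
    (hM : ∀ y ∈ S, iteratedDeriv 2 φ y / 2 ≤ M) :
    φ x ≤ φ b + deriv φ b * (x - b) + M * (x - b) ^ 2 := by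
  obtain ⟨η, hη, h⟩ := hφ.exists_taylor_two b x
  have := mul_le_mul_of_nonneg_right (hM η (OrdConnected.uIcc_subset ‹_› hb hx hη))
    (sq_nonneg (x - b))
  linarith

lemma IsCompact.exists_eq_mul_of_bounds {X : Type*} [TopologicalSpace X] {K : Set X}
    (hK : IsCompact K) (hKc : IsPreconnected K) (hne : K.Nonempty) {f : X → ℝ}
    (hf : ContinuousOn f K) {A t : ℝ} (hA : 0 ≤ A)
    (hlow : ∀ m, (∀ y ∈ K, m ≤ f y) → m * A ≤ t) (hup : ∀ M, (∀ y ∈ K, f y ≤ M) → t ≤ M * A) :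
    ∃ ξ ∈ K, t = A * f ξ := by
  obtain ⟨xm, hxmK, hxm⟩ := hK.exists_isMinOn hne hf
  obtain ⟨xM, hxMK, hxM⟩ := hK.exists_isMaxOn hne hf
  have htm := hlow (f xm) fun y hy => hxm hy
  have htM := hup (f xM) fun y hy => hxM hy
  rcases hA.eq_or_lt with rfl | hA
  · exact ⟨xm, hxmK, by linarith⟩
  obtain ⟨ξ, hξK, hξ⟩ := hKc.intermediate_value hxmK hxMK hf
    ⟨(le_div_iff₀ hA).2 htm, (div_le_iff₀ hA).2 htM⟩
  exact ⟨ξ, hξK, by rw [hξ]; field_simp⟩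

lemma LinearMap.monotone_of_map_nonneg {X : Type*} [TopologicalSpace X] {F : C(X, ℝ) →ₗ[ℝ] ℝ}
    (hF : ∀ g : C(X, ℝ), (∀ x, 0 ≤ g x) → 0 ≤ F g) : Monotone F := fun g h hgh => by
  simpa [sub_nonneg] using hF (h - g) fun x => sub_nonneg.2 (hgh x)

lemma mem_Icc_of_map_eMon_one {F : C(Icc (0:ℝ) 1, ℝ) →ₗ[ℝ] ℝ} (hF : Monotone F) {b : ℝ}
    (hF0 : F (eMon 0) = 1) (hF1 : F (eMon 1) = b) : b ∈ Icc (0:ℝ) 1 := by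
  refine ⟨?_, ?_⟩
  · simpa [hF1] using hF (show 0 ≤ eMon 1 from fun x => by simpa [eMon] using x.2.1)
  · simpa [hF0, hF1] using hF (show eMon 1 ≤ eMon 0 from fun x => by simpa [eMon] using x.2.2)

noncomputable def quadraticAt (b p q c : ℝ) : C(Icc (0:ℝ) 1, ℝ) :=
  ⟨fun x => p + q * (x - b) + c * (x - b) ^ 2, by fun_prop⟩

@[simp]
lemma quadraticAt_apply (b p q c : ℝ) (x : Icc (0:ℝ) 1) :
    quadraticAt b p q c x = p + q * (x - b) + c * (x - b) ^ 2 := rfl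

lemma quadraticAt_eq (b p q c : ℝ) : quadraticAt b p q c =
    (p - q * b + c * b ^ 2) • eMon 0 + (q - 2 * c * b) • eMon 1 + c • eMon 2 := by
  ext x
  simp [eMon]
  ring

lemma map_quadraticAt {F : C(Icc (0:ℝ) 1, ℝ) →ₗ[ℝ] ℝ} {b : ℝ} (hF0 : F (eMon 0) = 1)
    (hF1 : F (eMon 1) = b) (p q c : ℝ) :
    F (quadraticAt b p q c) = p + c * (F (eMon 2) - b ^ 2) := by
  simp only [quadraticAt_eq, map_add, map_smul, hF0, hF1, smul_eq_mul]
  ring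

theorem positive_functional_mean_value
    (F : C(Set.Icc (0:ℝ) 1, ℝ) →ₗ[ℝ] ℝ)
    (hFpos : ∀ g : C(Set.Icc (0:ℝ) 1, ℝ), (∀ x, 0 ≤ g x) → 0 ≤ F g)
    (b : ℝ) (hF0 : F (eMon 0) = 1) (hF1 : F (eMon 1) = b)
    (φ : ℝ → ℝ) (hφ : ContDiff ℝ 2 φ) :
    ∃ ξ ∈ Set.Icc (0:ℝ) 1,
      F ⟨fun x => φ x, hφ.continuous.comp continuous_subtype_val⟩ - φ b =
        (F (eMon 2) - b ^ 2) * iteratedDeriv 2 φ ξ / 2 := by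
  set Φ : C(Icc (0:ℝ) 1, ℝ) := ⟨fun x => φ x, hφ.continuous.comp continuous_subtype_val⟩
  have hF := LinearMap.monotone_of_map_nonneg hFpos
  have hb := mem_Icc_of_map_eMon_one hF hF0 hF1
  have hvar : 0 ≤ F (eMon 2) - b ^ 2 := by
    simpa [map_quadraticAt hF0 hF1] using
      hFpos (quadraticAt b 0 0 1) fun x => by simpa using sq_nonneg ((x : ℝ) - b)
  have hlow (m : ℝ) (hm : ∀ y ∈ Icc (0:ℝ) 1, m ≤ iteratedDeriv 2 φ y / 2) :
      m * (F (eMon 2) - b ^ 2) ≤ F Φ - φ b := by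
    have := hF (show quadraticAt b (φ b) (deriv φ b) m ≤ Φ from
      fun x => hφ.taylor_two_lower_bound hb x.2 hm)
    linarith [map_quadraticAt hF0 hF1 (φ b) (deriv φ b) m]
  have hup (M : ℝ) (hM : ∀ y ∈ Icc (0:ℝ) 1, iteratedDeriv 2 φ y / 2 ≤ M) :
      F Φ - φ b ≤ M * (F (eMon 2) - b ^ 2) := by
    have := hF (show Φ ≤ quadraticAt b (φ b) (deriv φ b) M from
      fun x => hφ.taylor_two_upper_bound hb x.2 hM)
    linarith [map_quadraticAt hF0 hF1 (φ b) (deriv φ b) M]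
  obtain ⟨ξ, hξ, h⟩ := isCompact_Icc.exists_eq_mul_of_bounds isPreconnected_Icc
    (nonempty_Icc.2 zero_le_one)
    ((hφ.continuous_iteratedDeriv 2 le_rfl).div_const 2).continuousOn hvar hlow hup
  exact ⟨ξ, hξ, by rw [h]; ring⟩
end
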